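/- For r+k > 0, the space of homogeneous polynomial k-forms decomposes as a direct sum H_rΛ^k(ℝ^n) = κH_{r−1}Λ^{k+1}(ℝ^n) ⊕ dH_{r+1}Λ^{k−1}(ℝ^n). -/

import Mathlib

open MvPolynomial

/-- Polynomial differential forms on `ℝ^n`: a family of polynomial coefficients indexed by
subsets `σ ⊆ {1,…,n}`; a `k`-form is supported on sets of cardinality `k`. -/
abbrev PolyForm (n : ℕ) := Finset (Fin n) → MvPolynomial (Fin n) ℝ

/-- The sign `(-1)^{#{j ∈ σ : j < i}}`. -/
noncomputable def sgn {n : ℕ} (σ : Finset (Fin n)) (i : Fin n) : MvPolynomial (Fin n) ℝ :=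
  (-1) ^ (σ.filter (fun j => j < i)).card

/-- The exterior derivative `d`. -/
noncomputable def extD (n : ℕ) : PolyForm n →ₗ[ℝ] PolyForm n where
  toFun ω := fun σ => ∑ i ∈ σ, sgn σ i * pderiv i (ω (σ.erase i))
  map_add' ω η := by
    funext σ
    simp [Pi.add_apply, mul_add, Finset.sum_add_distrib]
  map_smul' c ω := by
    funext σ
    simp [Pi.smul_apply, Finset.smul_sum, mul_smul_comm]

/-- The Koszul operator `κ` (contraction with the position vector field). -/
noncomputable def koszul (n : ℕ) : PolyForm n →ₗ[ℝ] PolyForm n where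
  toFun ω := fun σ => ∑ i ∈ σᶜ, sgn σ i * X i * ω (insert i σ)
  map_add' ω η := by
    funext σ
    simp [Pi.add_apply, mul_add, Finset.sum_add_distrib]
  map_smul' c ω := by
    funext σ
    simp [Pi.smul_apply, Finset.smul_sum, mul_smul_comm]

/-- The space of (polynomial) differential `k`-forms: families supported on index sets of
cardinality `k`. -/
noncomputable def Lambda (n k : ℕ) : Submodule ℝ (PolyForm n) where
  carrier := {ω | ∀ σ, σ.card ≠ k → ω σ = 0}
  zero_mem' := fun σ _ => rfl
  add_mem' := fun ha hb σ h => by simp only [Pi.add_apply, ha σ h, hb σ h, add_zero]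
  smul_mem' := fun c ω h σ hσ => by simp only [Pi.smul_apply, h σ hσ, smul_zero]

/-- The form monomial `x^α dx_σ`. -/
noncomputable def formMonomial {n : ℕ} (α : Fin n →₀ ℕ) (σ : Finset (Fin n)) : PolyForm n :=
  fun τ => if τ = σ then monomial α 1 else 0

/-- The (total) degree `|α|` of a multi-index. -/
def mdeg {n : ℕ} (α : Fin n →₀ ℕ) : ℕ := α.sum fun _ m => m

/-- The linear degree of the form monomial `x^α dx_σ`: the number of `i ∉ σ` with `α i = 1`. -/
def ldeg {n : ℕ} (α : Fin n →₀ ℕ) (σ : Finset (Fin n)) : ℕ :=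
  ((σᶜ).filter fun i => α i = 1).card

/-- `H_rΛ^k(ℝ^n)`: `k`-forms with homogeneous degree-`r` polynomial coefficients. -/
noncomputable def Hspace (n r k : ℕ) : Submodule ℝ (PolyForm n) :=
  Submodule.span ℝ {ω | ∃ α σ, σ.card = k ∧ mdeg α = r ∧ ω = formMonomial α σ}

/-- `P_rΛ^k(ℝ^n)`: `k`-forms with polynomial coefficients of degree at most `r`. -/
noncomputable def Pspace (n r k : ℕ) : Submodule ℝ (PolyForm n) :=
  Submodule.span ℝ {ω | ∃ α σ, σ.card = k ∧ mdeg α ≤ r ∧ ω = formMonomial α σ}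

/-- `H_{r,l}Λ^k(ℝ^n)`: homogeneous degree-`r` `k`-forms of linear degree at least `l`. -/
noncomputable def Hl (n r l k : ℕ) : Submodule ℝ (PolyForm n) :=
  Submodule.span ℝ
    {ω | ∃ α σ, σ.card = k ∧ mdeg α = r ∧ l ≤ ldeg α σ ∧ ω = formMonomial α σ}

/-- `J_rΛ^k(ℝ^n) := Σ_{l ≥ 1} κ H_{r+l-1, l}Λ^{k+1}(ℝ^n)` (here `l` is reindexed as `l+1`). -/
noncomputable def Jspace (n r k : ℕ) : Submodule ℝ (PolyForm n) :=
  ⨆ l : ℕ, Submodule.map (koszul n) (Hl n (r + l) (l + 1) (k + 1))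

/-- The trimmed polynomial space `P_r^-Λ^k := P_{r-1}Λ^k ⊕ κ H_{r-1}Λ^{k+1}`. -/
noncomputable def PminusSpace (n r k : ℕ) : Submodule ℝ (PolyForm n) :=
  Pspace n (r - 1) k ⊔ Submodule.map (koszul n) (Hspace n (r - 1) (k + 1))

/-- The serendipity space `S_rΛ^k := P_rΛ^k + J_rΛ^k + d J_{r+1}Λ^{k-1}`
(the last summand being absent for `k = 0`). -/
noncomputable def Sspace (n r k : ℕ) : Submodule ℝ (PolyForm n) :=
  Pspace n r k ⊔ Jspace n r k ⊔
    (if k = 0 then ⊥ else Submodule.map (extD n) (Jspace n (r + 1) (k - 1)))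

/-- The trimmed serendipity space `S_r^-Λ^k := S_{r-1}Λ^k + κ S_{r-1}Λ^{k+1}`. -/
noncomputable def SminusSpace (n r k : ℕ) : Submodule ℝ (PolyForm n) :=
  Sspace n (r - 1) k ⊔ Submodule.map (koszul n) (Sspace n (r - 1) (k + 1))

/-! Both operators square to zero, and pointwise `dκ + κd` is the form degree plus the Euler
operator, so on `H_rΛ^k` it is multiplication by `r + k`. Dividing by `r + k` writes every
`ω ∈ H_rΛ^k` as `d(κω) / (r + k) + κ(dω) / (r + k)`; an element of both summands is killed by `d`
and by `κ`, hence by `r + k`. For `k = 0` (resp. `r = 0`) the term `d(κω)` (resp. `κ(dω)`)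
vanishes, as `κ` kills `0`-forms and `d` kills constants. -/

open Finset MvPolynomial

variable {n : ℕ}

theorem sgn_eq_C (s : Finset (Fin n)) (i : Fin n) :
    sgn s i = C ((-1 : ℝ) ^ #{j ∈ s | j < i}) := by
  rw [sgn, map_pow, map_neg, map_one]

theorem sgn_mul_self (s : Finset (Fin n)) (i : Fin n) : sgn s i * sgn s i = 1 := by
  rw [sgn, ← pow_add]
  exact Even.neg_one_pow ⟨_, rfl⟩

theorem sgn_insert_self (s : Finset (Fin n)) (i : Fin n) : sgn (insert i s) i = sgn s i := by
  rw [sgn, sgn, filter_insert, if_neg (lt_irrefl i)]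

theorem sgn_erase_self (s : Finset (Fin n)) (i : Fin n) : sgn (s.erase i) i = sgn s i := by
  rw [sgn, sgn, filter_erase, erase_eq_of_notMem (by simp)]

theorem sgn_insert_of_notMem {s : Finset (Fin n)} {i : Fin n} (hi : i ∉ s) (j : Fin n) :
    sgn (insert i s) j = (if i < j then -1 else 1) * sgn s j := by
  rw [sgn, sgn, filter_insert]
  split_ifs
  · rw [card_insert_of_notMem (by simp [hi]), pow_succ, mul_comm]
  · rw [one_mul]

theorem sgn_of_mem {s : Finset (Fin n)} {i : Fin n} (hi : i ∈ s) (j : Fin n) :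
    sgn s j = (if i < j then -1 else 1) * sgn (s.erase i) j := by
  conv_lhs => rw [← insert_erase hi]
  exact sgn_insert_of_notMem (notMem_erase i s) j

-- Swapping the roles of `i` and `j` flips exactly one relative-order sign.
theorem sgn_mul_sgn_erase_add_sgn_mul_sgn_insert {τ : Finset (Fin n)} {i j : Fin n}
    (hi : i ∈ τ) (hj : j ∉ τ) :
    sgn τ i * sgn (τ.erase i) j + sgn τ j * sgn (insert j τ) i = 0 := by
  rw [sgn_insert_of_notMem hj i, sgn_of_mem hi j]
  rcases lt_or_gt_of_ne (ne_of_mem_of_not_mem hi hj) with h | h <;>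
    simp only [h, h.not_gt, if_true, if_false] <;> ring

theorem sgn_mul_sgn_insert_add_sgn_mul_sgn_insert {τ : Finset (Fin n)} {i j : Fin n}
    (hi : i ∉ τ) (hj : j ∉ τ) (hij : i ≠ j) :
    sgn τ i * sgn (insert i τ) j + sgn τ j * sgn (insert j τ) i = 0 := by
  rw [sgn_insert_of_notMem hi j, sgn_insert_of_notMem hj i]
  rcases lt_or_gt_of_ne hij with h | h <;>
    simp only [h, h.not_gt, if_true, if_false] <;> ring

theorem sgn_mul_sgn_erase_add_sgn_mul_sgn_erase {τ : Finset (Fin n)} {i j : Fin n}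
    (hi : i ∈ τ) (hj : j ∈ τ) (hij : i ≠ j) :
    sgn τ i * sgn (τ.erase i) j + sgn τ j * sgn (τ.erase j) i = 0 := by
  rw [sgn_of_mem hj i, sgn_of_mem hi j]
  rcases lt_or_gt_of_ne hij with h | h <;>
    simp only [h, h.not_gt, if_true, if_false] <;> ring

theorem pderiv_sgn_mul (s : Finset (Fin n)) (i j : Fin n) (p : MvPolynomial (Fin n) ℝ) :
    pderiv j (sgn s i * p) = sgn s i * pderiv j p := by
  rw [sgn_eq_C, pderiv_C_mul]

theorem isHomogeneous_sgn_mul {p : MvPolynomial (Fin n) ℝ} {m : ℕ} (hp : p.IsHomogeneous m)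
    (s : Finset (Fin n)) (i : Fin n) : (sgn s i * p).IsHomogeneous m := by
  rw [sgn_eq_C]
  exact hp.C_mul _

theorem sum_sum_erase_eq_zero_of_antisymm {ι M : Type*} [DecidableEq ι] [AddCommMonoid M]
    {s : Finset ι} {f : ι → ι → M} (hf : ∀ i ∈ s, ∀ j ∈ s.erase i, f i j + f j i = 0) :
    ∑ i ∈ s, ∑ j ∈ s.erase i, f i j = 0 := by
  rw [sum_sigma']
  refine sum_involution (fun x _ => ⟨x.2, x.1⟩) (fun x hx => ?_) (fun x hx _ => ?_)
    (fun x hx => ?_) (fun _ _ => rfl)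
  · simp only [mem_sigma, mem_erase] at hx
    exact hf _ hx.1 _ (mem_erase.2 hx.2)
  · simp only [mem_sigma, mem_erase] at hx
    exact fun h => hx.2.1 (congrArg Sigma.fst h)
  · simp only [mem_sigma, mem_erase] at hx ⊢
    exact ⟨hx.2.2, Ne.symm hx.2.1, hx.1⟩

theorem pderiv_pderiv_comm {σ R : Type*} [CommSemiring R] (i j : σ) (p : MvPolynomial σ R) :
    pderiv i (pderiv j p) = pderiv j (pderiv i p) := by
  classical
  induction p using MvPolynomial.induction_on with
  | C a => simp
  | add p q hp hq => simp [map_add, hp, hq]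
  | mul_X p k hp =>
      simp only [pderiv_mul, pderiv_X, map_add, hp, Pi.single_apply,
        apply_ite (pderiv i), apply_ite (pderiv j), pderiv_one, map_zero]
      split_ifs <;> ring

theorem extD_apply (ω : PolyForm n) (τ : Finset (Fin n)) :
    extD n ω τ = ∑ i ∈ τ, sgn τ i * pderiv i (ω (τ.erase i)) := rfl

theorem koszul_apply (ω : PolyForm n) (τ : Finset (Fin n)) :
    koszul n ω τ = ∑ i ∈ τᶜ, sgn τ i * X i * ω (insert i τ) := rfl

theorem extD_extD (ω : PolyForm n) : extD n (extD n ω) = 0 := by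
  funext τ
  calc extD n (extD n ω) τ = ∑ i ∈ τ, ∑ j ∈ τ.erase i, sgn τ i * sgn (τ.erase i) j *
        pderiv i (pderiv j (ω ((τ.erase i).erase j))) := by
        simp only [extD_apply, map_sum, mul_sum, pderiv_sgn_mul, mul_assoc]
    _ = 0 := sum_sum_erase_eq_zero_of_antisymm fun i hi j hj => by
        rw [erase_right_comm, pderiv_pderiv_comm j i, ← add_mul,
          sgn_mul_sgn_erase_add_sgn_mul_sgn_erase hi (mem_of_mem_erase hj)
            (ne_of_mem_erase hj).symm, zero_mul]

theorem koszul_koszul (ω : PolyForm n) : koszul n (koszul n ω) = 0 := by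
  funext τ
  calc koszul n (koszul n ω) τ = ∑ i ∈ τᶜ, ∑ j ∈ τᶜ.erase i, sgn τ i * sgn (insert i τ) j *
        (X i * X j * ω (insert j (insert i τ))) := by
        simp only [koszul_apply, compl_insert, mul_sum]
        exact sum_congr rfl fun i _ => sum_congr rfl fun j _ => by ring
    _ = 0 := sum_sum_erase_eq_zero_of_antisymm fun i hi j hj => by
        rw [insert_comm j i, mul_comm (X j), ← add_mul,
          sgn_mul_sgn_insert_add_sgn_mul_sgn_insert (mem_compl.1 hi)
            (mem_compl.1 (mem_of_mem_erase hj)) (ne_of_mem_erase hj).symm, zero_mul]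

theorem extD_koszul_apply (ω : PolyForm n) (τ : Finset (Fin n)) :
    extD n (koszul n ω) τ = ∑ i ∈ τ, (ω τ + X i * pderiv i (ω τ)) +
      ∑ i ∈ τ, ∑ j ∈ τᶜ, sgn τ i * sgn (τ.erase i) j *
        (X j * pderiv i (ω (insert j (τ.erase i)))) := by
  rw [extD_apply, ← sum_add_distrib]
  refine sum_congr rfl fun i hi => ?_
  rw [koszul_apply, compl_erase, sum_insert (by simp [hi]), insert_erase hi, sgn_erase_self,
    map_add, mul_add, map_sum, mul_sum]
  congr 1
  · rw [mul_assoc, pderiv_sgn_mul, pderiv_mul, pderiv_X_self, ← mul_assoc, sgn_mul_self]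
    ring
  · refine sum_congr rfl fun j hj => ?_
    rw [mul_assoc (sgn _ j), pderiv_sgn_mul, pderiv_mul,
      pderiv_X_of_ne (ne_of_mem_of_not_mem hi (mem_compl.1 hj)).symm]
    ring

theorem koszul_extD_apply (ω : PolyForm n) (τ : Finset (Fin n)) :
    koszul n (extD n ω) τ = ∑ j ∈ τᶜ, X j * pderiv j (ω τ) +
      ∑ j ∈ τᶜ, ∑ i ∈ τ, sgn τ j * sgn (insert j τ) i *
        (X j * pderiv i (ω (insert j (τ.erase i)))) := by
  rw [koszul_apply, ← sum_add_distrib]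
  refine sum_congr rfl fun j hj => ?_
  have hj' : j ∉ τ := mem_compl.1 hj
  rw [extD_apply, sum_insert hj', erase_insert hj', sgn_insert_self, mul_add, mul_sum]
  congr 1
  · linear_combination (X j * pderiv j (ω τ)) * sgn_mul_self τ j
  · refine sum_congr rfl fun i hi => ?_
    rw [erase_insert_of_ne (ne_of_mem_of_not_mem hi hj').symm]
    ring

theorem extD_koszul_add_koszul_extD_apply (ω : PolyForm n) (τ : Finset (Fin n)) :
    extD n (koszul n ω) τ + koszul n (extD n ω) τ =
      #τ • ω τ + ∑ i, X i * pderiv i (ω τ) := by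
  have hcross : ∑ i ∈ τ, ∑ j ∈ τᶜ, sgn τ i * sgn (τ.erase i) j *
        (X j * pderiv i (ω (insert j (τ.erase i)))) +
      ∑ j ∈ τᶜ, ∑ i ∈ τ, sgn τ j * sgn (insert j τ) i *
        (X j * pderiv i (ω (insert j (τ.erase i)))) = 0 := by
    rw [sum_comm (s := τᶜ), ← sum_add_distrib]
    refine sum_eq_zero fun i hi => ?_
    rw [← sum_add_distrib]
    refine sum_eq_zero fun j hj => ?_
    rw [← add_mul, sgn_mul_sgn_erase_add_sgn_mul_sgn_insert hi (mem_compl.1 hj), zero_mul]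
  rw [extD_koszul_apply, koszul_extD_apply, ← sum_add_sum_compl τ, sum_add_distrib, sum_const]
  linear_combination hcross

theorem formMonomial_eq_single (α : Fin n →₀ ℕ) (σ : Finset (Fin n)) :
    formMonomial α σ = Pi.single σ (monomial α 1) := by
  funext τ
  simp only [formMonomial, Pi.single_apply]

theorem single_mem_Hspace {r k : ℕ} {σ : Finset (Fin n)} {p : MvPolynomial (Fin n) ℝ}
    (hσ : #σ = k) (hp : p.IsHomogeneous r) : Pi.single σ p ∈ Hspace n r k := by
  have hsum : Pi.single σ p = ∑ v ∈ p.support, coeff v p • formMonomial v σ := by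
    conv_lhs => rw [p.as_sum]
    simp only [formMonomial_eq_single, ← Pi.single_smul, smul_monomial, smul_eq_mul, mul_one]
    exact map_sum (AddMonoidHom.single _ σ) _ _
  rw [hsum]
  exact sum_mem fun v hv => Submodule.smul_mem _ _ <|
    Submodule.subset_span ⟨v, σ, hσ, (hp.degree_eq_sum_deg_support hv).symm, rfl⟩

theorem mem_Hspace_iff {r k : ℕ} {ω : PolyForm n} :
    ω ∈ Hspace n r k ↔ ω ∈ Lambda n k ∧ ∀ σ, (ω σ).IsHomogeneous r := by
  constructor
  · suffices Hspace n r k ≤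
        Lambda n k ⊓ Submodule.pi Set.univ fun _ => homogeneousSubmodule (Fin n) ℝ r from
      fun hω => ⟨(this hω).1, fun σ => (this hω).2 σ trivial⟩
    refine Submodule.span_le.2 ?_
    rintro _ ⟨α, σ, hσ, hα, rfl⟩
    refine ⟨fun τ hτ => if_neg (by rintro rfl; exact hτ hσ), fun τ _ => ?_⟩
    rw [SetLike.mem_coe, mem_homogeneousSubmodule, formMonomial]
    split_ifs
    exacts [isHomogeneous_monomial _ hα, isHomogeneous_zero _ _ _]
  · rintro ⟨hΛ, hhom⟩
    rw [← Finset.univ_sum_single ω]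
    refine sum_mem fun σ _ => ?_
    by_cases hσ : #σ = k
    · exact single_mem_Hspace hσ (hhom σ)
    · rw [hΛ σ hσ, Pi.single_zero]
      exact zero_mem _

theorem koszul_mem_Hspace {r k : ℕ} {ω : PolyForm n} (hω : ω ∈ Hspace n r (k + 1)) :
    koszul n ω ∈ Hspace n (r + 1) k := by
  obtain ⟨hΛ, hhom⟩ := mem_Hspace_iff.1 hω
  refine mem_Hspace_iff.2 ⟨fun τ hτ => sum_eq_zero fun i hi => ?_, fun τ => ?_⟩
  · rw [hΛ _ (by rw [card_insert_of_notMem (mem_compl.1 hi)]; omega), mul_zero]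
  · refine IsHomogeneous.sum _ _ _ fun i _ => ?_
    rw [mul_assoc, add_comm]
    exact isHomogeneous_sgn_mul ((isHomogeneous_X ℝ i).mul (hhom _)) _ _

theorem extD_mem_Hspace {r k : ℕ} {ω : PolyForm n} (hω : ω ∈ Hspace n (r + 1) k) :
    extD n ω ∈ Hspace n r (k + 1) := by
  obtain ⟨hΛ, hhom⟩ := mem_Hspace_iff.1 hω
  refine mem_Hspace_iff.2 ⟨fun τ hτ => sum_eq_zero fun i hi => ?_, fun τ => ?_⟩
  · have := card_pos.2 ⟨i, hi⟩
    rw [hΛ _ (by rw [card_erase_of_mem hi]; omega), map_zero, mul_zero]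
  · exact IsHomogeneous.sum _ _ _ fun i _ => isHomogeneous_sgn_mul (hhom _).pderiv _ _

theorem koszul_eq_zero_of_mem_Lambda_zero {ω : PolyForm n} (hω : ω ∈ Lambda n 0) :
    koszul n ω = 0 :=
  funext fun τ => sum_eq_zero fun i _ => by
    rw [hω _ (card_ne_zero_of_mem (mem_insert_self i τ)), mul_zero]

theorem extD_eq_zero_of_isHomogeneous_zero {ω : PolyForm n} (hω : ∀ σ, (ω σ).IsHomogeneous 0) :
    extD n ω = 0 :=
  funext fun τ => sum_eq_zero fun i _ => by
    rw [totalDegree_eq_zero_iff_eq_C.1 ((totalDegree_zero_iff_isHomogeneous _).2 (hω _)),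
      pderiv_C, mul_zero]

theorem extD_koszul_add_koszul_extD_of_mem_Hspace {r k : ℕ} {ω : PolyForm n}
    (hω : ω ∈ Hspace n r k) :
    extD n (koszul n ω) + koszul n (extD n ω) = (r + k : ℝ) • ω := by
  obtain ⟨hΛ, hhom⟩ := mem_Hspace_iff.1 hω
  funext τ
  rw [Pi.add_apply, extD_koszul_add_koszul_extD_apply, (hhom τ).sum_X_mul_pderiv, Pi.smul_apply]
  by_cases hτ : #τ = k
  · rw [hτ, add_comm (r : ℝ), add_smul, Nat.cast_smul_eq_nsmul, Nat.cast_smul_eq_nsmul]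
  · simp [hΛ τ hτ]

theorem ite_map_koszul_le (n r k : ℕ) :
    (if r = 0 then ⊥ else Submodule.map (koszul n) (Hspace n (r - 1) (k + 1))) ≤
      Hspace n r k ⊓ LinearMap.ker (koszul n) := by
  split_ifs with hr
  · exact bot_le
  · obtain ⟨r, rfl⟩ := Nat.exists_eq_add_one_of_ne_zero hr
    rintro _ ⟨η, hη, rfl⟩
    exact ⟨koszul_mem_Hspace hη, koszul_koszul η⟩

theorem ite_map_extD_le (n r k : ℕ) :
    (if k = 0 then ⊥ else Submodule.map (extD n) (Hspace n (r + 1) (k - 1))) ≤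
      Hspace n r k ⊓ LinearMap.ker (extD n) := by
  split_ifs with hk
  · exact bot_le
  · obtain ⟨k, rfl⟩ := Nat.exists_eq_add_one_of_ne_zero hk
    rintro _ ⟨η, hη, rfl⟩
    exact ⟨extD_mem_Hspace hη, extD_extD η⟩

theorem koszul_extD_mem_ite {r k : ℕ} {ω : PolyForm n} (hω : ω ∈ Hspace n r k) :
    koszul n (extD n ω) ∈
      if r = 0 then ⊥ else Submodule.map (koszul n) (Hspace n (r - 1) (k + 1)) := by
  split_ifs with hr
  · subst hr
    rw [extD_eq_zero_of_isHomogeneous_zero (mem_Hspace_iff.1 hω).2, map_zero]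
    exact zero_mem _
  · obtain ⟨r, rfl⟩ := Nat.exists_eq_add_one_of_ne_zero hr
    exact ⟨_, extD_mem_Hspace hω, rfl⟩

theorem extD_koszul_mem_ite {r k : ℕ} {ω : PolyForm n} (hω : ω ∈ Hspace n r k) :
    extD n (koszul n ω) ∈
      if k = 0 then ⊥ else Submodule.map (extD n) (Hspace n (r + 1) (k - 1)) := by
  split_ifs with hk
  · subst hk
    rw [koszul_eq_zero_of_mem_Lambda_zero (mem_Hspace_iff.1 hω).1, map_zero]
    exact zero_mem _
  · obtain ⟨k, rfl⟩ := Nat.exists_eq_add_one_of_ne_zero hk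
    exact ⟨_, koszul_mem_Hspace hω, rfl⟩

/-- for `r + k > 0`,
`H_rΛ^k(ℝ^n) = κH_{r-1}Λ^{k+1}(ℝ^n) ⊕ dH_{r+1}Λ^{k-1}(ℝ^n)` (a direct sum). -/
theorem Hspace_decomp (n r k : ℕ) (h : 0 < r + k) :
    Hspace n r k =
      (if r = 0 then ⊥ else Submodule.map (koszul n) (Hspace n (r - 1) (k + 1))) ⊔
      (if k = 0 then ⊥ else Submodule.map (extD n) (Hspace n (r + 1) (k - 1))) ∧
    Disjoint
      (if r = 0 then (⊥ : Submodule ℝ (PolyForm n))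
        else Submodule.map (koszul n) (Hspace n (r - 1) (k + 1)))
      (if k = 0 then (⊥ : Submodule ℝ (PolyForm n))
        else Submodule.map (extD n) (Hspace n (r + 1) (k - 1))) := by
  have hrk : (r + k : ℝ) ≠ 0 := by exact_mod_cast h.ne'
  have hK := ite_map_koszul_le n r k
  have hD := ite_map_extD_le n r k
  refine ⟨le_antisymm (fun ω hω => ?_) (sup_le (hK.trans inf_le_left) (hD.trans inf_le_left)),
    Submodule.disjoint_def.2 fun x hxK hxD => ?_⟩
  · have hdecomp : ω = (r + k : ℝ)⁻¹ • (extD n (koszul n ω) + koszul n (extD n ω)) := by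
      rw [extD_koszul_add_koszul_extD_of_mem_Hspace hω, inv_smul_smul₀ hrk]
    rw [hdecomp]
    exact Submodule.smul_mem _ _ <| add_mem
      (Submodule.mem_sup_right (extD_koszul_mem_ite hω))
      (Submodule.mem_sup_left (koszul_extD_mem_ite hω))
  · obtain ⟨hx, hκx⟩ := hK hxK
    have hdx : extD n x = 0 := (hD hxD).2
    have hscale := extD_koszul_add_koszul_extD_of_mem_Hspace hx
    rw [LinearMap.mem_ker.1 hκx, hdx, map_zero, map_zero, add_zero] at hscale
    exact (smul_eq_zero.1 hscale.symm).resolve_left hrk
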